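/- Let I be a continuous cocycle by isometries of ℝ^l over T, I(x)v = Ψ(x)v + ρ(x), with maximal drift D(T,I) = lim_n (1/n) sup_x |I(n,x)0| = 0; equivalently (1/n) ∑_{j=0}^{n-1} Ψ(x)⁻¹⋯Ψ(T^j x)⁻¹ ρ(T^j x) → 0 uniformly in x. Then the solutions u_λ of the hyperbolized equations satisfy lim_{λ→1⁻} sup_{x∈X} |u_λ(Tx) − Ψ(x)u_λ(x) − ρ(x)| = 0. -/

import Mathlib

open scoped Topology
open Filter Matrix MeasureTheory
noncomputable section

abbrev UG (l : ℕ) := Matrix.orthogonalGroup (Fin l) ℝ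

def act {l : ℕ} (M : UG l) (v : EuclideanSpace ℝ (Fin l)) : EuclideanSpace ℝ (Fin l) :=
  WithLp.toLp 2 ((M : Matrix (Fin l) (Fin l) ℝ).mulVec v)

def invProd {l : ℕ} {X : Type*} (T : X → X) (Ψ : X → UG l) (x : X) (j : ℕ) : UG l :=
  (((List.range (j + 1)).map (fun k => (Ψ (T^[k] x))⁻¹)).prod)

lemma act_one {l : ℕ} (v : EuclideanSpace ℝ (Fin l)) : act 1 v = v := by
  simp [act, Matrix.one_mulVec]

lemma act_mul {l : ℕ} (M N : UG l) (v : EuclideanSpace ℝ (Fin l)) :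
    act (M * N) v = act M (act N v) := by
  simp [act, Matrix.mulVec_mulVec]

lemma norm_act {l : ℕ} (M : UG l) (v : EuclideanSpace ℝ (Fin l)) : ‖act M v‖ = ‖v‖ := by
  have h : @inner ℝ _ _ (act M v) (act M v) = @inner ℝ _ _ v v := by
    have hM : (star (M : Matrix (Fin l) (Fin l) ℝ)) * M = 1 :=
      (Matrix.mem_orthogonalGroup_iff' (Fin l) ℝ).mp M.2
    simp only [PiLp.inner_apply, RCLike.inner_apply, conj_trivial]
    show (act M v).ofLp ⬝ᵥ (act M v).ofLp = v.ofLp ⬝ᵥ v.ofLp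
    unfold act
    rw [WithLp.ofLp_toLp, dotProduct_mulVec, ← mulVec_transpose, mulVec_mulVec]
    have : ((M : Matrix (Fin l) (Fin l) ℝ)ᵀ) = star (M : Matrix (Fin l) (Fin l) ℝ) := rfl
    rw [this, hM, Matrix.one_mulVec]
  have := congrArg Real.sqrt h
  rwa [real_inner_self_eq_norm_sq, real_inner_self_eq_norm_sq,
    Real.sqrt_sq (norm_nonneg _), Real.sqrt_sq (norm_nonneg _)] at this

def actL {l : ℕ} (M : UG l) : EuclideanSpace ℝ (Fin l) →L[ℝ] EuclideanSpace ℝ (Fin l) :=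
  LinearMap.toContinuousLinearMap
    { toFun := act M
      map_add' := fun v w => by simp [act, Matrix.mulVec_add]
      map_smul' := fun c v => by simp [act, Matrix.mulVec_smul] }

lemma actL_apply {l : ℕ} (M : UG l) (v : EuclideanSpace ℝ (Fin l)) : actL M v = act M v := rfl

lemma invProd_zero {l : ℕ} {X : Type*} (T : X → X) (Ψ : X → UG l) (x : X) :
    invProd T Ψ x 0 = (Ψ x)⁻¹ := by
  simp [invProd, List.range_succ]

lemma invProd_succ {l : ℕ} {X : Type*} (T : X → X) (Ψ : X → UG l) (x : X) (j : ℕ) :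
    invProd T Ψ x (j + 1) = (Ψ x)⁻¹ * invProd T Ψ (T x) j := by
  unfold invProd
  rw [List.range_succ_eq_map, List.map_cons, List.prod_cons, List.map_map]
  simp only [Function.iterate_zero_apply]
  have h : ((fun k => (Ψ (T^[k] x))⁻¹) ∘ Nat.succ) = (fun k => (Ψ (T^[k] (T x)))⁻¹) := by
    ext1 k
    simp [Function.comp, Function.iterate_succ_apply]
  rw [h]

def fwdProd {l : ℕ} {X : Type*} (T : X → X) (F : X → UG l) (x : X) (j : ℕ) : UG l :=
  (((List.range j).map (fun k => F (T^[k] x))).prod)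

def uLam {l : ℕ} {X : Type*} (T : X → X) (Ψ : X → UG l) (ρ : X → EuclideanSpace ℝ (Fin l))
    (lam : ℝ) (x : X) : EuclideanSpace ℝ (Fin l) :=
  -∑' j : ℕ, lam ^ j • act (invProd T Ψ x j) (ρ (T^[j] x))

def Af {l : ℕ} {X : Type*} (T : X → X) (Ψ : X → UG l) (ρ : X → EuclideanSpace ℝ (Fin l))
    (j : ℕ) (x : X) : EuclideanSpace ℝ (Fin l) :=
  act (invProd T Ψ x j) (ρ (T^[j] x))

def Sf {l : ℕ} {X : Type*} (T : X → X) (Ψ : X → UG l) (ρ : X → EuclideanSpace ℝ (Fin l))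
    (n : ℕ) (x : X) : EuclideanSpace ℝ (Fin l) :=
  ∑ j ∈ Finset.range n, Af T Ψ ρ j x

section Main

variable {l : ℕ} {X : Type*} (T : X → X) (Ψ : X → UG l) (ρ : X → EuclideanSpace ℝ (Fin l))

lemma norm_Af (j : ℕ) (x : X) : ‖Af T Ψ ρ j x‖ = ‖ρ (T^[j] x)‖ := norm_act _ _

lemma act_Af_zero (x : X) : act (Ψ x) (Af T Ψ ρ 0 x) = ρ x := by
  rw [Af, invProd_zero, ← act_mul, mul_inv_cancel, act_one, Function.iterate_zero_apply]

lemma act_Af_succ (j : ℕ) (x : X) :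
    act (Ψ x) (Af T Ψ ρ (j + 1) x) = Af T Ψ ρ j (T x) := by
  rw [Af, invProd_succ, ← act_mul, mul_inv_cancel_left, Function.iterate_succ_apply, Af]

lemma uLam_eq (lam : ℝ) (x : X) : uLam T Ψ ρ lam x = -∑' j : ℕ, lam ^ j • Af T Ψ ρ j x := rfl

variable {C : ℝ}

lemma norm_Af_le (hC : ∀ x, ‖ρ x‖ ≤ C) (j : ℕ) (x : X) : ‖Af T Ψ ρ j x‖ ≤ C := by
  rw [norm_Af]; exact hC _

lemma norm_Sf_le (hC : ∀ x, ‖ρ x‖ ≤ C) (n : ℕ) (x : X) : ‖Sf T Ψ ρ n x‖ ≤ n * C := by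
  calc ‖Sf T Ψ ρ n x‖ ≤ ∑ j ∈ Finset.range n, ‖Af T Ψ ρ j x‖ := norm_sum_le _ _
    _ ≤ ∑ _j ∈ Finset.range n, C := Finset.sum_le_sum (fun j _ => norm_Af_le T Ψ ρ hC j x)
    _ = n * C := by simp [mul_comm]

lemma summable_Af (hC : ∀ x, ‖ρ x‖ ≤ C) {lam : ℝ} (hl : |lam| < 1) (x : X) :
    Summable (fun j : ℕ => lam ^ j • Af T Ψ ρ j x) := by
  apply Summable.of_norm_bounded (g := fun j => C * |lam| ^ j)
    ((summable_geometric_of_lt_one (abs_nonneg _) hl).mul_left C)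
  intro j
  rw [norm_smul, Real.norm_eq_abs, abs_pow, mul_comm]
  exact mul_le_mul_of_nonneg_right (norm_Af_le T Ψ ρ hC j x) (pow_nonneg (abs_nonneg _) j)

lemma key_identity (hC : ∀ x, ‖ρ x‖ ≤ C) {lam : ℝ} (hl : |lam| < 1) (x : X) :
    uLam T Ψ ρ lam (T x) - act (Ψ x) (uLam T Ψ ρ lam x) - ρ x
      = (1 - lam) • uLam T Ψ ρ lam (T x) := by
  have hsx := summable_Af T Ψ ρ hC hl x
  have hsTx := summable_Af T Ψ ρ hC hl (T x)
  have h1 : act (Ψ x) (uLam T Ψ ρ lam x) = -ρ x + lam • uLam T Ψ ρ lam (T x) := by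
    have hmap : act (Ψ x) (∑' j : ℕ, lam ^ j • Af T Ψ ρ j x)
        = ∑' j : ℕ, lam ^ j • act (Ψ x) (Af T Ψ ρ j x) := by
      rw [← actL_apply, ContinuousLinearMap.map_tsum _ hsx]
      simp [actL_apply]
    have hsf : Summable (fun j : ℕ => lam ^ j • act (Ψ x) (Af T Ψ ρ j x)) := by
      apply Summable.of_norm_bounded (g := fun j => C * |lam| ^ j)
        ((summable_geometric_of_lt_one (abs_nonneg _) hl).mul_left C)
      intro j
      rw [norm_smul, Real.norm_eq_abs, abs_pow, norm_act, mul_comm]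
      exact mul_le_mul_of_nonneg_right ((norm_Af T Ψ ρ j x) ▸ hC _)
        (pow_nonneg (abs_nonneg _) j)
    rw [uLam_eq, ← actL_apply, map_neg, actL_apply, hmap, Summable.tsum_eq_zero_add hsf]
    have h0 : lam ^ 0 • act (Ψ x) (Af T Ψ ρ 0 x) = ρ x := by
      rw [pow_zero, one_smul, act_Af_zero]
    have hsucc : (fun j : ℕ => lam ^ (j + 1) • act (Ψ x) (Af T Ψ ρ (j + 1) x))
        = fun j : ℕ => lam • (lam ^ j • Af T Ψ ρ j (T x)) := by
      ext1 j
      rw [act_Af_succ, smul_smul, ← pow_succ']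
    rw [h0, hsucc, Summable.tsum_const_smul lam hsTx, uLam_eq]
    rw [neg_add, smul_neg]
  rw [h1, uLam_eq, sub_smul, one_smul]
  abel

lemma summable_aux {lam : ℝ} (hl0 : 0 ≤ lam) (hl1 : lam < 1) :
    Summable (fun n : ℕ => ((n : ℝ) + 1) * lam ^ n) := by
  have hn : ‖lam‖ < 1 := by rw [Real.norm_eq_abs, abs_of_nonneg hl0]; exact hl1
  have h1 : Summable (fun n : ℕ => (n : ℝ) * lam ^ n) := by
    simpa using summable_pow_mul_geometric_of_norm_lt_one 1 hn
  have h2 : Summable (fun n : ℕ => lam ^ n) := summable_geometric_of_lt_one hl0 hl1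
  have := h1.add h2
  convert this using 2 with n
  ring

lemma tsum_aux {lam : ℝ} (hl0 : 0 ≤ lam) (hl1 : lam < 1) :
    ∑' n : ℕ, ((n : ℝ) + 1) * lam ^ n = ((1 - lam) ^ 2)⁻¹ := by
  have hn : ‖lam‖ < 1 := by rw [Real.norm_eq_abs, abs_of_nonneg hl0]; exact hl1
  have h1 : Summable (fun n : ℕ => (n : ℝ) * lam ^ n) := by
    simpa using summable_pow_mul_geometric_of_norm_lt_one 1 hn
  have h2 : Summable (fun n : ℕ => lam ^ n) := summable_geometric_of_lt_one hl0 hl1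
  have hne : (1 : ℝ) - lam ≠ 0 := by intro h; nlinarith
  calc ∑' n : ℕ, ((n : ℝ) + 1) * lam ^ n
      = ∑' n : ℕ, ((n : ℝ) * lam ^ n + lam ^ n) := by congr 1; ext n; ring
    _ = (∑' n : ℕ, (n : ℝ) * lam ^ n) + ∑' n : ℕ, lam ^ n := Summable.tsum_add h1 h2
    _ = lam / (1 - lam) ^ 2 + (1 - lam)⁻¹ := by
        rw [tsum_coe_mul_geometric_of_norm_lt_one hn, tsum_geometric_of_lt_one hl0 hl1]
    _ = ((1 - lam) ^ 2)⁻¹ := by field_simp; ring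

lemma summable_Sf (hC0 : 0 ≤ C) (hC : ∀ x, ‖ρ x‖ ≤ C) {lam : ℝ} (hl0 : 0 ≤ lam) (hl1 : lam < 1) (x : X) (m : ℕ) :
    Summable (fun n : ℕ => lam ^ n • Sf T Ψ ρ (n + m) x) := by
  apply Summable.of_norm_bounded (g := fun n : ℕ => ((n : ℝ) + 1) * lam ^ n * (((m : ℝ) + 1) * C))
    ((summable_aux hl0 hl1).mul_right _)
  intro n
  rw [norm_smul, Real.norm_eq_abs, abs_pow, abs_of_nonneg hl0]
  have h1 : ‖Sf T Ψ ρ (n + m) x‖ ≤ ((n + m : ℕ) : ℝ) * C := norm_Sf_le T Ψ ρ hC _ x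
  have h2 : ((n + m : ℕ) : ℝ) * C ≤ ((n : ℝ) + 1) * (((m : ℝ) + 1) * C) := by
    push_cast
    nlinarith [hC0, mul_nonneg (mul_nonneg (Nat.cast_nonneg n : (0:ℝ) ≤ n)
      (Nat.cast_nonneg m : (0:ℝ) ≤ m)) hC0]
  have h3 : ‖Sf T Ψ ρ (n + m) x‖ ≤ ((n : ℝ) + 1) * (((m : ℝ) + 1) * C) := h1.trans h2
  calc lam ^ n * ‖Sf T Ψ ρ (n + m) x‖ ≤ lam ^ n * (((n : ℝ) + 1) * (((m : ℝ) + 1) * C)) :=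
        mul_le_mul_of_nonneg_left h3 (pow_nonneg hl0 n)
    _ = ((n : ℝ) + 1) * lam ^ n * (((m : ℝ) + 1) * C) := by ring

lemma abel_identity (hC0 : 0 ≤ C) (hC : ∀ x, ‖ρ x‖ ≤ C) {lam : ℝ} (hl0 : 0 ≤ lam) (hl1 : lam < 1) (x : X) :
    (∑' j : ℕ, lam ^ j • Af T Ψ ρ j x)
      = (1 - lam) • ∑' n : ℕ, lam ^ n • Sf T Ψ ρ (n + 1) x := by
  have hg := summable_Sf T Ψ ρ hC0 hC hl0 hl1 x 1
  have hh : Summable (fun n : ℕ => lam ^ n • Sf T Ψ ρ n x) := by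
    simpa using summable_Sf T Ψ ρ hC0 hC hl0 hl1 x 0
  calc ∑' j : ℕ, lam ^ j • Af T Ψ ρ j x
      = ∑' n : ℕ, (lam ^ n • Sf T Ψ ρ (n + 1) x - lam ^ n • Sf T Ψ ρ n x) := by
        congr 1; funext n
        rw [← smul_sub]
        congr 1
        simp [Sf, Finset.sum_range_succ]
    _ = (∑' n : ℕ, lam ^ n • Sf T Ψ ρ (n + 1) x) - ∑' n : ℕ, lam ^ n • Sf T Ψ ρ n x :=
        Summable.tsum_sub hg hh
    _ = (∑' n : ℕ, lam ^ n • Sf T Ψ ρ (n + 1) x)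
        - lam • ∑' n : ℕ, lam ^ n • Sf T Ψ ρ (n + 1) x := by
        congr 1
        rw [Summable.tsum_eq_zero_add hh]
        have h0 : lam ^ 0 • Sf T Ψ ρ 0 x = 0 := by simp [Sf]
        have hsucc : (fun n : ℕ => lam ^ (n + 1) • Sf T Ψ ρ (n + 1) x)
            = fun n : ℕ => lam • (lam ^ n • Sf T Ψ ρ (n + 1) x) := by
          ext1 n; rw [smul_smul, ← pow_succ']
        rw [h0, hsucc, Summable.tsum_const_smul lam hg, zero_add]
    _ = (1 - lam) • ∑' n : ℕ, lam ^ n • Sf T Ψ ρ (n + 1) x := by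
        rw [sub_smul, one_smul]

end Main

theorem stmt19 {l : ℕ} {X : Type*} [MetricSpace X] [CompactSpace X]
    (T : X ≃ₜ X) (Ψ : X → UG l) (hΨ : Continuous Ψ)
    (ρ : X → EuclideanSpace ℝ (Fin l)) (hρ : Continuous ρ)
    (hdrift : TendstoUniformly
      (fun (n : ℕ) (x : X) =>
        (n : ℝ)⁻¹ • ∑ j ∈ Finset.range n, act (invProd T Ψ x j) (ρ ((⇑T)^[j] x)))
      (fun _ => 0) atTop) :
    TendstoUniformly
      (fun (lam : ℝ) (x : X) =>
        uLam T Ψ ρ lam (T x) - act (Ψ x) (uLam T Ψ ρ lam x) - ρ x)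
      (fun _ => 0) (𝓝[<] (1 : ℝ)) := by
  classical
  obtain ⟨C, hC0, hC⟩ : ∃ C : ℝ, 0 ≤ C ∧ ∀ x, ‖ρ x‖ ≤ C := by
    obtain ⟨C, hCu⟩ := (isCompact_range (hρ.norm)).bddAbove
    exact ⟨max C 0, le_max_right _ _,
      fun x => le_max_of_le_left (hCu (Set.mem_range_self x))⟩
  rw [Metric.tendstoUniformly_iff] at hdrift ⊢
  intro ε hε
  obtain ⟨N, hN⟩ := eventually_atTop.mp (hdrift (ε / 2) (by positivity))
  set N₁ : ℕ := max N 1 with hN₁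
  set K : ℝ := (N₁ : ℝ) * C with hKdef
  have hK0 : 0 ≤ K := mul_nonneg (Nat.cast_nonneg _) hC0
  have hSbound : ∀ (n : ℕ) (x : X), ‖Sf (⇑T) Ψ ρ n x‖ ≤ (ε / 2) * n + K := by
    intro n x
    by_cases hn : N₁ ≤ n
    · have hNn : N ≤ n := le_trans (le_max_left _ _) hn
      have h := hN n hNn x
      rw [dist_zero_left] at h
      have hn1 : 1 ≤ n := le_trans (le_max_right _ _) hn
      have hnpos : (0 : ℝ) < n := by exact_mod_cast Nat.lt_of_lt_of_le Nat.zero_lt_one hn1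
      have h' : ‖Sf (⇑T) Ψ ρ n x‖ < (n : ℝ) * (ε / 2) := by
        have heq : ((n : ℝ))⁻¹ • (∑ j ∈ Finset.range n, act (invProd (⇑T) Ψ x j)
            (ρ ((⇑T)^[j] x))) = (n : ℝ)⁻¹ • Sf (⇑T) Ψ ρ n x := rfl
        rw [heq, norm_smul, Real.norm_eq_abs, abs_inv, abs_of_pos hnpos,
          inv_mul_lt_iff₀ hnpos] at h
        exact h
      have : (n : ℝ) * (ε / 2) = (ε / 2) * n := mul_comm _ _
      linarith
    · have h1 : ‖Sf (⇑T) Ψ ρ n x‖ ≤ (n : ℝ) * C := norm_Sf_le (⇑T) Ψ ρ hC n x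
      have h2 : (n : ℝ) * C ≤ K := by
        rw [hKdef]
        have : (n : ℝ) ≤ (N₁ : ℝ) := by exact_mod_cast le_of_not_ge hn
        exact mul_le_mul_of_nonneg_right this hC0
      have h3 : 0 ≤ (ε / 2) * n := by positivity
      linarith
  set δ : ℝ := min (1 / 2) ((ε / 2) / (K + 1)) with hδdef
  have hδpos : 0 < δ := lt_min (by norm_num) (by positivity)
  have hδhalf : δ ≤ 1 / 2 := min_le_left _ _
  have hδK : δ ≤ (ε / 2) / (K + 1) := min_le_right _ _
  have hmem : Set.Ioo (1 - δ) 1 ∈ 𝓝[<] (1 : ℝ) :=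
    Ioo_mem_nhdsLT_of_mem ⟨by linarith, le_refl 1⟩
  filter_upwards [hmem] with lam hlam x
  have hl1 : lam < 1 := hlam.2
  have hl0 : 0 < lam := by
    have := hlam.1; linarith
  have habs : |lam| < 1 := abs_lt.mpr ⟨by linarith, hl1⟩
  have hd : 0 < 1 - lam := by linarith
  rw [dist_zero_left, key_identity (⇑T) Ψ ρ hC habs x]
  set y := T x with hy
  rw [uLam_eq, abel_identity (⇑T) Ψ ρ hC0 hC hl0.le hl1 y]
  set G : EuclideanSpace ℝ (Fin l) := ∑' n : ℕ, lam ^ n • Sf (⇑T) Ψ ρ (n + 1) y with hG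
  have hnorm : ‖(1 - lam) • -((1 - lam) • G)‖ = (1 - lam) ^ 2 * ‖G‖ := by
    rw [norm_smul, norm_neg, norm_smul, Real.norm_eq_abs, abs_of_pos hd]
    ring
  rw [hnorm]
  -- bound ‖G‖
  have hptwise : ∀ n : ℕ, ‖lam ^ n • Sf (⇑T) Ψ ρ (n + 1) y‖
      ≤ (ε / 2) * (((n : ℝ) + 1) * lam ^ n) + K * lam ^ n := by
    intro n
    rw [norm_smul, Real.norm_eq_abs, abs_pow, abs_of_pos hl0]
    have h1 : ‖Sf (⇑T) Ψ ρ (n + 1) y‖ ≤ (ε / 2) * ((n : ℕ) + 1 : ℕ) + K := hSbound (n + 1) y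
    have h1' : ‖Sf (⇑T) Ψ ρ (n + 1) y‖ ≤ (ε / 2) * ((n : ℝ) + 1) + K := by
      push_cast at h1; linarith
    have hp : (0 : ℝ) ≤ lam ^ n := pow_nonneg hl0.le n
    calc lam ^ n * ‖Sf (⇑T) Ψ ρ (n + 1) y‖
        ≤ lam ^ n * ((ε / 2) * ((n : ℝ) + 1) + K) := mul_le_mul_of_nonneg_left h1' hp
      _ = (ε / 2) * (((n : ℝ) + 1) * lam ^ n) + K * lam ^ n := by ring
  have hbsum : Summable (fun n : ℕ => (ε / 2) * (((n : ℝ) + 1) * lam ^ n) + K * lam ^ n) :=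
    ((summable_aux hl0.le hl1).mul_left _).add
      ((summable_geometric_of_lt_one hl0.le hl1).mul_left K)
  have hnsum : Summable (fun n : ℕ => ‖lam ^ n • Sf (⇑T) Ψ ρ (n + 1) y‖) :=
    Summable.of_nonneg_of_le (fun n => norm_nonneg _) hptwise hbsum
  have hGle : ‖G‖ ≤ (ε / 2) * ((1 - lam) ^ 2)⁻¹ + K * (1 - lam)⁻¹ := by
    calc ‖G‖ ≤ ∑' n : ℕ, ‖lam ^ n • Sf (⇑T) Ψ ρ (n + 1) y‖ := norm_tsum_le_tsum_norm hnsum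
      _ ≤ ∑' n : ℕ, ((ε / 2) * (((n : ℝ) + 1) * lam ^ n) + K * lam ^ n) :=
          Summable.tsum_le_tsum hptwise hnsum hbsum
      _ = (ε / 2) * (∑' n : ℕ, ((n : ℝ) + 1) * lam ^ n) + K * ∑' n : ℕ, lam ^ n := by
          rw [Summable.tsum_add ((summable_aux hl0.le hl1).mul_left _)
            ((summable_geometric_of_lt_one hl0.le hl1).mul_left K),
            tsum_mul_left, tsum_mul_left]
      _ = (ε / 2) * ((1 - lam) ^ 2)⁻¹ + K * (1 - lam)⁻¹ := by
          rw [tsum_aux hl0.le hl1, tsum_geometric_of_lt_one hl0.le hl1]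
  have hfinal : (1 - lam) ^ 2 * ((ε / 2) * ((1 - lam) ^ 2)⁻¹ + K * (1 - lam)⁻¹)
      = ε / 2 + (1 - lam) * K := by
    field_simp
  have hlast : (1 - lam) * K < ε / 2 := by
    have h1 : 1 - lam < δ := by linarith [hlam.1]
    have h2 : (1 - lam) * (K + 1) < δ * (K + 1) := by nlinarith
    have h3 : δ * (K + 1) ≤ ε / 2 :=
      (le_div_iff₀ (by positivity : (0:ℝ) < K + 1)).mp hδK
    nlinarith
  calc (1 - lam) ^ 2 * ‖G‖
      ≤ (1 - lam) ^ 2 * ((ε / 2) * ((1 - lam) ^ 2)⁻¹ + K * (1 - lam)⁻¹) := by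
        apply mul_le_mul_of_nonneg_left hGle (by positivity)
    _ = ε / 2 + (1 - lam) * K := hfinal
    _ < ε := by linarith
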